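/- arXiv:0909.2184 — 2 statements merged into one kernel-verified Lean document; each statement's English description precedes it below -/
import Mathlib

section
/- Let J ⊆ S = K[x_0,…,x_n] be a strongly stable monomial ideal generated by s monomials of degree r, and let P be a natural number with dim_K (S/J)_{r+1} < P. Then every homogeneous ideal I ⊆ S generated by its degree-r component with dim_K (S/I)_{r+1} = P satisfies Δ_J(I) = 0; that is, I_r is not a vector-space complement of ⟨N(J)_r⟩ in S_r (either I_r ∩ ⟨N(J)_r⟩ ≠ 0 or I_r + ⟨N(J)_r⟩ ≠ S_r). -/
/-!
If `V` is a complement of `⟨N(J)_r⟩` in `S_r`, then for every `β ∈ B` there is `f_β ∈ V` whose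
coefficients at the monomials of `B` are those of `x^β`. Strong stability gives the
Eliahou–Kervaire decomposition: every monomial of `J_(r+1)` is `x^β * x_m` with `β ∈ B` and
`x_m` no larger than any variable of `x^β`, so `dim J_(r+1)` is at most the number of such pairs
`(m, β)`. The products `f_β * x_m` lie in `I_(r+1)` and are linearly independent, because their
coefficients at the monomials `x^β * x_m` form a unitriangular matrix once the pairs are ordered
by `m`. Hence `dim J_(r+1) ≤ dim I_(r+1)`, contradicting
`dim (S/J)_(r+1) < P = dim (S/I)_(r+1)`.
-/

open MvPolynomial Finsupp

namespace Finsupp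

variable {σ : Type*}

theorem eq_of_le_of_degree_eq {a b : σ →₀ ℕ} (hle : a ≤ b) (h : a.degree = b.degree) :
    a = b := by
  have := congrArg degree (add_tsub_cancel_of_le hle)
  rw [map_add, h, add_eq_left, degree_eq_zero_iff, tsub_eq_zero_iff_le] at this
  exact le_antisymm hle this

theorem exists_eq_single_of_degree_eq_one {d : σ →₀ ℕ} (h : d.degree = 1) :
    ∃ i, d = single i 1 := by
  obtain ⟨i, hi⟩ : d.support.Nonempty := by
    rw [Finset.nonempty_iff_ne_empty, Ne, support_eq_empty]
    rintro rfl
    simp at h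
  have hle : single i 1 ≤ d := single_le_iff.2 (Nat.one_le_iff_ne_zero.2 (mem_support_iff.1 hi))
  exact ⟨i, (eq_of_le_of_degree_eq hle (by rw [degree_single, h])).symm⟩

end Finsupp

theorem linearIndependent_of_triangular {R M ι κ : Type*} [Ring R] [AddCommGroup M]
    [Module R M] [Fintype ι] [LinearOrder κ] {v : ι → M} (ℓ : ι → M →ₗ[R] R) (key : ι → κ)
    (hdiag : ∀ i, IsUnit (ℓ i (v i))) (hoff : ∀ i j, key j ≤ key i → j ≠ i → ℓ i (v j) = 0) :
    LinearIndependent R v := by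
  classical
  rw [Fintype.linearIndependent_iff]
  intro c hc
  by_contra! hne
  obtain ⟨i, hi, himax⟩ := (Finset.univ.filter fun j => c j ≠ 0).exists_max_image key
    (by simpa [Finset.filter_nonempty_iff] using hne)
  have hci : c i ≠ 0 := (Finset.mem_filter.1 hi).2
  have : c i * ℓ i (v i) = 0 := by
    rw [← map_zero (ℓ i), ← hc, map_sum, Finset.sum_eq_single i]
    · simp
    · intro j _ hji
      by_cases hcj : c j = 0
      · simp [hcj]
      · simp [hoff i j (himax j (by simpa using hcj)) hji]
    · simp
  exact hci ((hdiag i).mul_left_eq_zero.1 this)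

section StronglyStable

variable {σ : Type*} [LinearOrder σ]

def IsStronglyStable (B : Set (σ →₀ ℕ)) : Prop :=
  ∀ β ∈ B, ∀ i j, i < j → β i ≠ 0 → β - single i 1 + single j 1 ∈ B

theorem IsStronglyStable.exists_eq_add_single {B : Set (σ →₀ ℕ)} (hB : IsStronglyStable B)
    {r : ℕ} (hdeg : ∀ β ∈ B, β.degree = r) {β δ : σ →₀ ℕ} (hβ : β ∈ B) (hle : β ≤ δ)
    (hδ : δ.degree = r + 1) :
    ∃ m, ∃ β' ∈ B, (∀ i ∈ β'.support, m ≤ i) ∧ δ = β' + single m 1 := by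
  obtain ⟨i, hi⟩ : ∃ i, δ - β = single i 1 := by
    apply exists_eq_single_of_degree_eq_one
    have := congrArg degree (add_tsub_cancel_of_le hle)
    rw [map_add, hdeg β hβ, hδ] at this
    omega
  have hδeq : δ = β + single i 1 := by rw [← hi, add_tsub_cancel_of_le hle]
  have hsupp : δ.support.Nonempty := ⟨i, by simp [hδeq]⟩
  obtain ⟨m, hmδ, hmδmin⟩ : ∃ m ∈ δ.support, ∀ j ∈ δ.support, m ≤ j :=
    ⟨_, δ.support.min'_mem hsupp, fun j hj => δ.support.min'_le j hj⟩
  have hmin : ∀ γ ≤ δ, ∀ j ∈ γ.support, m ≤ j := fun γ hγ j hj =>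
    hmδmin j (support_mono hγ hj)
  by_cases hmi : m = i
  · exact ⟨m, β, hβ, hmin β hle, hmi ▸ hδeq⟩
  · have hβm : β m ≠ 0 := by
      simpa [hδeq, single_apply, Ne.symm hmi] using hmδ
    have hm1 : single m 1 ≤ β := single_le_iff.2 (Nat.one_le_iff_ne_zero.2 hβm)
    have hδeq' : δ = β - single m 1 + single i 1 + single m 1 := by
      rw [add_right_comm, tsub_add_cancel_of_le hm1, hδeq]
    have hmlt : m < i := lt_of_le_of_ne (hmin δ le_rfl i (by simp [hδeq])) hmi
    exact ⟨m, _, hB β hβ m i hmlt hβm, hmin _ (hδeq' ▸ le_self_add), hδeq'⟩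

theorem isStronglyStable_of_monomial_mem {R : Type*} [CommSemiring R] [Nontrivial R]
    {B : Set (σ →₀ ℕ)} {r : ℕ} (hdeg : ∀ β ∈ B, β.degree = r)
    (hstable : ∀ β : σ →₀ ℕ, monomial β (1 : R) ∈ Ideal.span ((monomial · 1) '' B) →
      ∀ i j, i < j → β i ≠ 0 → monomial (β - single i 1 + single j 1) (1 : R) ∈
        Ideal.span ((monomial · 1) '' B)) :
    IsStronglyStable B := by
  classical
  intro β hβ i j hij hβi
  have hmem := hstable β (Ideal.subset_span ⟨β, hβ, rfl⟩) i j hij hβi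
  rw [mem_ideal_span_monomial_image] at hmem
  obtain ⟨b, hb, hble⟩ := hmem (β - single i 1 + single j 1) (by simp [support_monomial])
  have h1 : single i 1 ≤ β := single_le_iff.2 (Nat.one_le_iff_ne_zero.2 hβi)
  have hdeg' : (β - single i 1 + single j 1).degree = r := by
    have := congrArg degree (tsub_add_cancel_of_le h1)
    rw [map_add, degree_single, hdeg β hβ] at this
    rw [map_add, degree_single]
    omega
  exact eq_of_le_of_degree_eq hble (by rw [hdeg b hb, hdeg']) ▸ hb

-- For `B` strongly stable of degree `r`, `(m, β) ↦ x^β * x_m` enumerates the monomials of degree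
-- `r + 1` of the ideal generated by `B` (Eliahou–Kervaire).
def eliahouKervairePairs [Fintype σ] (B : Finset (σ →₀ ℕ)) : Finset (σ × (σ →₀ ℕ)) :=
  {p ∈ Finset.univ ×ˢ B | ∀ i ∈ p.2.support, p.1 ≤ i}

theorem mem_eliahouKervairePairs [Fintype σ] {B : Finset (σ →₀ ℕ)} {p : σ × (σ →₀ ℕ)} :
    p ∈ eliahouKervairePairs B ↔ p.2 ∈ B ∧ ∀ i ∈ p.2.support, p.1 ≤ i := by
  simp [eliahouKervairePairs]

end StronglyStable

section Polynomial

variable {R σ : Type*}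

theorem exists_mem_coeff_eq_of_mem_sup_restrictSupport [CommSemiring R]
    {V : Submodule R (MvPolynomial σ R)} {N : Set (σ →₀ ℕ)} {x : MvPolynomial σ R}
    (hx : x ∈ V ⊔ restrictSupport R N) : ∃ v ∈ V, ∀ γ ∉ N, coeff γ v = coeff γ x := by
  obtain ⟨v, hv, g, hg, rfl⟩ := Submodule.mem_sup.1 hx
  refine ⟨v, hv, fun γ hγ => ?_⟩
  have : coeff γ g = 0 :=
    MvPolynomial.notMem_support_iff.1 fun h => hγ ((mem_restrictSupport_iff R).1 hg h)
  rw [coeff_add, this, add_zero]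

theorem linearIndependent_mul_X [CommRing R] [LinearOrder σ] {T : Finset (σ × (σ →₀ ℕ))}
    (hT : ∀ p ∈ T, ∀ i ∈ p.2.support, p.1 ≤ i) {f : (σ →₀ ℕ) → MvPolynomial σ R}
    (hf : ∀ p ∈ T, ∀ q ∈ T, coeff q.2 (f p.2) = if p.2 = q.2 then 1 else 0) :
    LinearIndependent R (fun p : T => f p.1.2 * X p.1.1) := by
  classical
  refine linearIndependent_of_triangular (fun p => lcoeff R (p.1.2 + single p.1.1 1))
    (fun p => p.1.1) (fun p => by simp [coeff_mul_X, hf p.1 p.2 p.1 p.2]) ?_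
  rintro ⟨p, hp⟩ ⟨q, hq⟩ hle hne
  simp only [lcoeff_apply, coeff_mul_X']
  split_ifs with hmem
  · have hqp : q.1 = p.1 := by
      refine le_antisymm hle ?_
      by_cases h : q.1 = p.1
      · exact h.ge
      · exact hT p hp q.1 (by simpa [single_apply, Ne.symm h] using hmem)
    rw [hqp, add_tsub_cancel_right, hf q hq p hp, if_neg]
    exact fun h => hne (Subtype.ext (Prod.ext hqp h))
  · rfl

end Polynomial

section FiniteDimensional

variable {σ K : Type*} [LinearOrder σ] [Fintype σ] [Field K]

instance (n : ℕ) : Module.Finite K (homogeneousSubmodule σ K n) :=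
  Module.Finite.iff_fg.2 (homogeneousSubmodule_fg σ K n)

theorem finrank_span_monomial_inf_homogeneousSubmodule_le {B : Finset (σ →₀ ℕ)}
    (hB : IsStronglyStable (B : Set (σ →₀ ℕ))) {r : ℕ} (hdeg : ∀ β ∈ B, β.degree = r) :
    Module.finrank K ↥((Ideal.span ((monomial · (1 : K)) '' B)).restrictScalars K ⊓
      homogeneousSubmodule σ K (r + 1)) ≤ (eliahouKervairePairs B).card := by
  classical
  set S := (eliahouKervairePairs B).image fun p => p.2 + single p.1 1
  have hle : (Ideal.span ((monomial · (1 : K)) '' B)).restrictScalars K ⊓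
      homogeneousSubmodule σ K (r + 1) ≤ restrictSupport K (S : Set (σ →₀ ℕ)) := by
    rintro x ⟨hxJ, hxH⟩ δ hδ
    obtain ⟨β, hβ, hβδ⟩ := (mem_ideal_span_monomial_image.1 hxJ) δ hδ
    have hδdeg : δ.degree = r + 1 := by
      rw [homogeneousSubmodule_eq_finsupp_supported] at hxH
      exact hxH hδ
    obtain ⟨m, β', hβ', hm, rfl⟩ := hB.exists_eq_add_single hdeg hβ hβδ hδdeg
    exact Finset.mem_image.2 ⟨(m, β'), mem_eliahouKervairePairs.2 ⟨hβ', hm⟩, rfl⟩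
  have := Module.Finite.of_basis (basisRestrictSupport K (S : Set (σ →₀ ℕ)))
  calc _ ≤ Module.finrank K (restrictSupport K (S : Set (σ →₀ ℕ))) :=
        Submodule.finrank_mono hle
    _ = S.card := by rw [Module.finrank_eq_card_basis (basisRestrictSupport K _)]; simp
    _ ≤ _ := Finset.card_image_le

theorem card_eliahouKervairePairs_le_finrank {B : Finset (σ →₀ ℕ)}
    {V : Submodule K (MvPolynomial σ K)} {r : ℕ} (hV : V ≤ homogeneousSubmodule σ K r)
    {f : (σ →₀ ℕ) → MvPolynomial σ K} (hfV : ∀ β ∈ B, f β ∈ V)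
    (hf : ∀ β ∈ B, ∀ β' ∈ B, coeff β' (f β) = if β = β' then 1 else 0) :
    (eliahouKervairePairs B).card ≤
      Module.finrank K ↥((Ideal.span (V : Set (MvPolynomial σ K))).restrictScalars K ⊓
        homogeneousSubmodule σ K (r + 1)) := by
  have hli := linearIndependent_mul_X (fun p hp => (mem_eliahouKervairePairs.1 hp).2) (f := f)
    fun p hp q hq => hf _ (mem_eliahouKervairePairs.1 hp).1 _ (mem_eliahouKervairePairs.1 hq).1
  have hle :
      Submodule.span K (Set.range fun p : eliahouKervairePairs B => f p.1.2 * X p.1.1) ≤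
      (Ideal.span (V : Set (MvPolynomial σ K))).restrictScalars K ⊓
        homogeneousSubmodule σ K (r + 1) := by
    rw [Submodule.span_le]
    rintro _ ⟨⟨p, hp⟩, rfl⟩
    have hfp := hfV _ (mem_eliahouKervairePairs.1 hp).1
    exact ⟨Ideal.mul_mem_right _ _ (Ideal.subset_span hfp),
      (hV hfp).mul (isHomogeneous_X K p.1)⟩
  have : Module.Finite K ↥((Ideal.span (V : Set (MvPolynomial σ K))).restrictScalars K ⊓
      homogeneousSubmodule σ K (r + 1)) := Submodule.finiteDimensional_of_le inf_le_right
  calc _ = Fintype.card (eliahouKervairePairs B) := (Fintype.card_coe _).symm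
    _ = _ := (finrank_span_eq_card hli).symm
    _ ≤ _ := Submodule.finrank_mono hle

theorem finrank_span_monomial_inf_homogeneousSubmodule_le_finrank {B : Finset (σ →₀ ℕ)}
    (hB : IsStronglyStable (B : Set (σ →₀ ℕ))) {r : ℕ} (hdeg : ∀ β ∈ B, β.degree = r)
    {V : Submodule K (MvPolynomial σ K)} (hV : V ≤ homogeneousSubmodule σ K r)
    (hsup : V ⊔ Submodule.span K ((monomial · (1 : K)) '' {γ | γ.degree = r ∧ γ ∉ B}) =
      homogeneousSubmodule σ K r) :
    Module.finrank K ↥((Ideal.span ((monomial · (1 : K)) '' B)).restrictScalars K ⊓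
      homogeneousSubmodule σ K (r + 1)) ≤
    Module.finrank K ↥((Ideal.span (V : Set (MvPolynomial σ K))).restrictScalars K ⊓
      homogeneousSubmodule σ K (r + 1)) := by
  classical
  have hdual : ∀ β ∈ B, ∃ v ∈ V, ∀ β' ∈ B, coeff β' v = if β = β' then 1 else 0 := by
    intro β hβ
    have hmem : monomial β (1 : K) ∈ V ⊔ restrictSupport K {γ | γ.degree = r ∧ γ ∉ B} := by
      rw [restrictSupport_eq_span, hsup]
      exact isHomogeneous_monomial 1 (hdeg β hβ)
    obtain ⟨v, hv, hcoeff⟩ := exists_mem_coeff_eq_of_mem_sup_restrictSupport hmem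
    exact ⟨v, hv, fun β' hβ' => by simp [hcoeff β' fun h => h.2 hβ', coeff_monomial]⟩
  choose! f hfV hf using hdual
  exact (finrank_span_monomial_inf_homogeneousSubmodule_le hB hdeg).trans
    (card_eliahouKervairePairs_le_finrank hV hfV hf)

end FiniteDimensional

theorem stmt_11_general {K : Type*} [Field K] {n : ℕ} (r P : ℕ)
    (B : Finset (Fin (n + 1) →₀ ℕ))
    (hBdeg : ∀ α ∈ B, α.sum (fun _ e => e) = r)
    (J : Ideal (MvPolynomial (Fin (n + 1)) K))
    (hJ : J = Ideal.span ((fun a : Fin (n + 1) →₀ ℕ => (monomial a (1 : K) :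
      MvPolynomial (Fin (n + 1)) K)) '' ↑B))
    (hSS : ∀ β : Fin (n + 1) →₀ ℕ, monomial β (1 : K) ∈ J →
      ∀ i j : Fin (n + 1), i < j → β i ≠ 0 →
        monomial (β - Finsupp.single i 1 + Finsupp.single j 1) (1 : K) ∈ J)
    (hP : Module.finrank K ↥(homogeneousSubmodule (Fin (n + 1)) K (r + 1)) <
      Module.finrank K
        ↥(Submodule.restrictScalars K J ⊓ homogeneousSubmodule (Fin (n + 1)) K (r + 1)) + P) :
    ∀ V : Submodule K (MvPolynomial (Fin (n + 1)) K),
      V ≤ homogeneousSubmodule (Fin (n + 1)) K r →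
      (Module.finrank K
          ↥(Submodule.restrictScalars K (Ideal.span (V : Set (MvPolynomial (Fin (n + 1)) K)))
            ⊓ homogeneousSubmodule (Fin (n + 1)) K (r + 1)) + P
        = Module.finrank K ↥(homogeneousSubmodule (Fin (n + 1)) K (r + 1))) →
      ¬ (Disjoint V (Submodule.span K ((fun γ : Fin (n + 1) →₀ ℕ => (monomial γ (1 : K) :
            MvPolynomial (Fin (n + 1)) K)) '' {γ | γ.sum (fun _ e => e) = r ∧ γ ∉ B})) ∧
          V ⊔ Submodule.span K ((fun γ : Fin (n + 1) →₀ ℕ => (monomial γ (1 : K) :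
            MvPolynomial (Fin (n + 1)) K)) '' {γ | γ.sum (fun _ e => e) = r ∧ γ ∉ B})
            = homogeneousSubmodule (Fin (n + 1)) K r) := by
  rintro V hV hdim ⟨-, hsup⟩
  subst hJ
  have hle := finrank_span_monomial_inf_homogeneousSubmodule_le_finrank
    (isStronglyStable_of_monomial_mem hBdeg hSS) hBdeg hV hsup
  omega

/-- **Corollary 2.10**: let `J` be a strongly stable ideal generated by `s` monomials of
degree `r` and `P` a natural number with `dim_K (S/J)_{r+1} < P`. Then every homogeneous
ideal `I` generated by its degree-`r` component `V` with `dim_K (S/I)_{r+1} = P` satisfies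
`Δ_J(I) = 0`, i.e. `V` is not a vector-space complement of `⟨N(J)_r⟩` in `S_r`.
(Quotient dimensions are encoded as `dim I_{r+1} + P = dim S_{r+1}` etc.) -/
theorem stmt_11 {K : Type*} [Field K] {n : ℕ} (r s P : ℕ)
    (B : Finset (Fin (n + 1) →₀ ℕ)) (hBcard : B.card = s)
    (hBdeg : ∀ α ∈ B, α.sum (fun _ e => e) = r)
    (J : Ideal (MvPolynomial (Fin (n + 1)) K))
    (hJ : J = Ideal.span ((fun a : Fin (n + 1) →₀ ℕ => (monomial a (1 : K) :
      MvPolynomial (Fin (n + 1)) K)) '' ↑B))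
    (hSS : ∀ β : Fin (n + 1) →₀ ℕ, monomial β (1 : K) ∈ J →
      ∀ i j : Fin (n + 1), i < j → β i ≠ 0 →
        monomial (β - Finsupp.single i 1 + Finsupp.single j 1) (1 : K) ∈ J)
    (hP : Module.finrank K ↥(homogeneousSubmodule (Fin (n + 1)) K (r + 1)) <
      Module.finrank K
        ↥(Submodule.restrictScalars K J ⊓ homogeneousSubmodule (Fin (n + 1)) K (r + 1)) + P) :
    ∀ V : Submodule K (MvPolynomial (Fin (n + 1)) K),
      V ≤ homogeneousSubmodule (Fin (n + 1)) K r →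
      (Module.finrank K
          ↥(Submodule.restrictScalars K (Ideal.span (V : Set (MvPolynomial (Fin (n + 1)) K)))
            ⊓ homogeneousSubmodule (Fin (n + 1)) K (r + 1)) + P
        = Module.finrank K ↥(homogeneousSubmodule (Fin (n + 1)) K (r + 1))) →
      ¬ (Disjoint V (Submodule.span K ((fun γ : Fin (n + 1) →₀ ℕ => (monomial γ (1 : K) :
            MvPolynomial (Fin (n + 1)) K)) '' {γ | γ.sum (fun _ e => e) = r ∧ γ ∉ B})) ∧
          V ⊔ Submodule.span K ((fun γ : Fin (n + 1) →₀ ℕ => (monomial γ (1 : K) :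
            MvPolynomial (Fin (n + 1)) K)) '' {γ | γ.sum (fun _ e => e) = r ∧ γ ∉ B})
            = homogeneousSubmodule (Fin (n + 1)) K r) :=
  stmt_11_general r P B hBdeg J hJ hSS hP
end

section
/- Let J ⊆ S = K[x_0,…,x_n] be a strongly stable monomial ideal all of whose minimal monomial generators have degree ≤ m. Let x^γ be a monomial of degree m not belonging to J and let x_i be a variable such that x_i·x^γ ∈ J. Then, writing x_h = min(x_i·x^γ) for the smallest variable dividing x_i·x^γ, one has x_h < x_i and the monomial (x_i·x^γ)/x_h belongs to J. -/
/-!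
A generator `x^α` of `J` dividing `x_i·x^γ` has degree `≤ m < m + 1`, so some variable `x_j` occurs
in it to a lower power than in `x_i·x^γ`, and `x_h ≤ x_j` by minimality of `x_h`. If `x^α` still
divides `(x_i·x^γ)/x_h` we are done. Otherwise `x_h` occurs in `x^α` to its full power in
`x_i·x^γ`, so `h ≠ j`, and strong stability trades one `x_h` of `x^α` for an `x_j`, which yields an
element of `J` dividing `(x_i·x^γ)/x_h`. Finally `h ≠ i`, since `(x_i·x^γ)/x_i = x^γ ∉ J`.
-/

open MvPolynomial Finsupp

namespace Finsupp

variable {σ : Type*}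

lemma exists_lt_of_le_of_degree_lt {α δ : σ →₀ ℕ} (hle : α ≤ δ) (hdeg : α.degree < δ.degree) :
    ∃ j, α j < δ j := by
  by_contra! hge
  exact hdeg.ne (congrArg degree (le_antisymm hle hge))

lemma apply_eq_ne_zero_of_not_le_tsub_single {α δ : σ →₀ ℕ} {k : σ} (hle : α ≤ δ)
    (hk : ¬α ≤ δ - single k 1) : α k = δ k ∧ α k ≠ 0 := by
  by_contra hαk
  refine hk fun l => ?_
  have := hle l
  rcases eq_or_ne k l with rfl | hkl
  · simp only [tsub_apply, single_eq_same]
    omega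
  · simpa [hkl] using this

lemma tsub_single_add_single_le_tsub_single {α δ : σ →₀ ℕ} {h j : σ} (hle : α ≤ δ)
    (hj : α j < δ j) (hhj : h ≠ j) : α - single h 1 + single j 1 ≤ δ - single h 1 := by
  intro l
  have := hle l
  rcases eq_or_ne h l with rfl | hhl
  · simp [hhj]
    omega
  rcases eq_or_ne j l with rfl | hjl
  · simp [hhl]
    omega
  · simpa [hhl, hjl] using this

end Finsupp

namespace MvPolynomial

variable {σ R : Type*} [CommSemiring R]

lemma monomial_one_mem_of_le {I : Ideal (MvPolynomial σ R)} {α δ : σ →₀ ℕ}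
    (hα : monomial α (1 : R) ∈ I) (hle : α ≤ δ) : monomial δ (1 : R) ∈ I :=
  I.mem_of_dvd (monomial_dvd_monomial.mpr ⟨Or.inr hle, one_dvd _⟩) hα

lemma monomial_one_mem_span_monomial_image_iff [Nontrivial R] {B : Set (σ →₀ ℕ)}
    {δ : σ →₀ ℕ} :
    monomial δ (1 : R) ∈ Ideal.span ((fun a => monomial a (1 : R)) '' B) ↔ ∃ α ∈ B, α ≤ δ := by
  classical
  rw [mem_ideal_span_monomial_image, support_monomial, if_neg one_ne_zero]
  simp

def IsStronglyStable [LinearOrder σ] (I : Ideal (MvPolynomial σ R)) : Prop :=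
  ∀ β : σ →₀ ℕ, monomial β (1 : R) ∈ I → ∀ i j : σ, i < j → β i ≠ 0 →
    monomial (β - single i 1 + single j 1) (1 : R) ∈ I

lemma IsStronglyStable.monomial_tsub_single_mem [LinearOrder σ] {I : Ideal (MvPolynomial σ R)}
    (hI : IsStronglyStable I) {α δ : σ →₀ ℕ} {h j : σ} (hα : monomial α (1 : R) ∈ I)
    (hle : α ≤ δ) (hj : α j < δ j) (hhj : h ≤ j) : monomial (δ - single h 1) (1 : R) ∈ I := by
  by_cases hαh : α ≤ δ - single h 1
  · exact monomial_one_mem_of_le hα hαh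
  obtain ⟨hαδ, hα0⟩ := apply_eq_ne_zero_of_not_le_tsub_single hle hαh
  have hhj_lt : h < j := hhj.lt_of_ne (by rintro rfl; omega)
  exact monomial_one_mem_of_le (hI α hα h j hhj_lt hα0)
    (tsub_single_add_single_le_tsub_single hle hj hhj_lt.ne)

end MvPolynomial

theorem stmt_14_general {K : Type*} [Field K] {n : ℕ} (m : ℕ)
    (B : Set (Fin (n + 1) →₀ ℕ))
    (hBdeg : ∀ α ∈ B, α.sum (fun _ e => e) ≤ m)
    (J : Ideal (MvPolynomial (Fin (n + 1)) K))
    (hJ : J = Ideal.span ((fun a : Fin (n + 1) →₀ ℕ => (monomial a (1 : K) :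
      MvPolynomial (Fin (n + 1)) K)) '' B))
    (hSS : ∀ β : Fin (n + 1) →₀ ℕ, monomial β (1 : K) ∈ J →
      ∀ i j : Fin (n + 1), i < j → β i ≠ 0 →
        monomial (β - Finsupp.single i 1 + Finsupp.single j 1) (1 : K) ∈ J)
    (γ : Fin (n + 1) →₀ ℕ) (hγdeg : γ.sum (fun _ e => e) = m)
    (hγ : monomial γ (1 : K) ∉ J)
    (i : Fin (n + 1))
    (hmem : monomial (γ + Finsupp.single i 1) (1 : K) ∈ J)
    (h : Fin (n + 1))
    (hhmin : ∀ j : Fin (n + 1), (γ + Finsupp.single i 1 : Fin (n + 1) →₀ ℕ) j ≠ 0 → h ≤ j) :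
    h < i ∧ monomial (γ + Finsupp.single i 1 - Finsupp.single h 1) (1 : K) ∈ J := by
  set δ := γ + single i 1
  have hδγ : δ - single i 1 = γ := add_tsub_cancel_right γ _
  obtain ⟨α, hαB, hαδ⟩ := monomial_one_mem_span_monomial_image_iff.mp (hJ ▸ hmem)
  have hαJ : monomial α (1 : K) ∈ J := hJ ▸ Ideal.subset_span ⟨α, hαB, rfl⟩
  have hdeg : α.degree < δ.degree := by
    have hα : α.degree ≤ m := hBdeg α hαB
    have hγm : γ.degree = m := hγdeg
    rw [map_add, degree_single, hγm]
    omega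
  obtain ⟨j, hj⟩ := exists_lt_of_le_of_degree_lt hαδ hdeg
  have hδh : monomial (δ - single h 1) (1 : K) ∈ J :=
    IsStronglyStable.monomial_tsub_single_mem hSS hαJ hαδ hj (hhmin j (by omega))
  refine ⟨(hhmin i (by simp [δ])).lt_of_ne ?_, hδh⟩
  rintro rfl
  exact hγ (hδγ ▸ hδh)

/-- The key rewriting step in the proof of **Theorem 3.3** (combining Lemma 1.4(i),(ii)):
let `J` be a strongly stable monomial ideal whose minimal generators have degree `≤ m`,
let `x^γ` be a monomial of degree `m` with `x^γ ∉ J` and `x_i·x^γ ∈ J`. If `x_h` is the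
smallest variable dividing `x_i·x^γ`, then `x_h < x_i` and `(x_i·x^γ)/x_h ∈ J`. -/
theorem stmt_14 {K : Type*} [Field K] {n : ℕ} (m : ℕ)
    (B : Set (Fin (n + 1) →₀ ℕ))
    (hBdeg : ∀ α ∈ B, α.sum (fun _ e => e) ≤ m)
    (J : Ideal (MvPolynomial (Fin (n + 1)) K))
    (hJ : J = Ideal.span ((fun a : Fin (n + 1) →₀ ℕ => (monomial a (1 : K) :
      MvPolynomial (Fin (n + 1)) K)) '' B))
    (hSS : ∀ β : Fin (n + 1) →₀ ℕ, monomial β (1 : K) ∈ J →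
      ∀ i j : Fin (n + 1), i < j → β i ≠ 0 →
        monomial (β - Finsupp.single i 1 + Finsupp.single j 1) (1 : K) ∈ J)
    (γ : Fin (n + 1) →₀ ℕ) (hγdeg : γ.sum (fun _ e => e) = m)
    (hγ : monomial γ (1 : K) ∉ J)
    (i : Fin (n + 1))
    (hmem : monomial (γ + Finsupp.single i 1) (1 : K) ∈ J)
    (h : Fin (n + 1)) (hh : (γ + Finsupp.single i 1 : Fin (n + 1) →₀ ℕ) h ≠ 0)
    (hhmin : ∀ j : Fin (n + 1), (γ + Finsupp.single i 1 : Fin (n + 1) →₀ ℕ) j ≠ 0 → h ≤ j) :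
    h < i ∧ monomial (γ + Finsupp.single i 1 - Finsupp.single h 1) (1 : K) ∈ J :=
  stmt_14_general m B hBdeg J hJ hSS γ hγdeg hγ i hmem h hhmin
end
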